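/- arXiv:1912.10555 — 3 statements merged into one kernel-verified Lean document; each statement's English description precedes it below -/
import Mathlib

section
/- Let Φ, Ψ : [0,1] → [0,∞) be continuously differentiable with Φ'(t) ≤ −κT·Φ(t) and Ψ'(t) ≥ κT·Ψ(t) for constants κ, T > 0. Set a = (T/2)·∫_{1/2}^{1} Ψ(t) dt and b = (T/2)·∫_{0}^{1/2} Φ(t) dt. Then (1/2)·√(Φ(1/2)·Ψ(1/2)) ≤ (κ/(exp(κT/2) − 1))·√(a·b). -/
open Real Set

/-!
Grönwall's lemma turns `Ψ' ≥ κT Ψ` into `Ψ(t) ≥ Ψ(1/2) e^{κT(t - 1/2)}` on `[1/2, 1]`,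
and, after reversing time, `Φ' ≤ -κT Φ` into `Φ(t) ≥ Φ(1/2) e^{κT(1/2 - t)}` on `[0, 1/2]`.
Integrating, `a ≥ Ψ(1/2) K` and `b ≥ Φ(1/2) K` with `K = (e^{κT/2} - 1)/(2κ)`,
so `√(ab) ≥ K √(Φ(1/2) Ψ(1/2))`.
-/

theorem mul_exp_le_of_mul_le_deriv {f f' : ℝ → ℝ} {a b c : ℝ}
    (hf : ∀ t ∈ Icc a b, HasDerivAt f (f' t) t) (h : ∀ t ∈ Icc a b, c * f t ≤ f' t) :
    ∀ t ∈ Icc a b, f a * exp (c * (t - a)) ≤ f t := by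
  set g : ℝ → ℝ := fun t ↦ f t * exp (c * (a - t))
  have hg : ∀ t ∈ Icc a b, HasDerivAt g ((f' t - c * f t) * exp (c * (a - t))) t := by
    intro t ht
    have hlin := ((hasDerivAt_id' t).const_sub a).const_mul c
    exact ((hf t ht).mul hlin.exp).congr_deriv (by ring)
  have hmono : MonotoneOn g (Icc a b) := by
    refine monotoneOn_of_hasDerivWithinAt_nonneg (convex_Icc a b)
      (fun t ht ↦ (hg t ht).continuousAt.continuousWithinAt)
      (fun t ht ↦ (hg t (interior_subset ht)).hasDerivWithinAt) fun t ht ↦ ?_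
    have ht := interior_subset ht
    exact mul_nonneg (sub_nonneg.2 (h t ht)) (exp_pos _).le
  intro t ht
  have hat : g a ≤ g t := hmono (left_mem_Icc.2 (ht.1.trans ht.2)) ht ht.1
  calc f a * exp (c * (t - a)) = g a * exp (c * (t - a)) := by simp [g]
    _ ≤ g t * exp (c * (t - a)) := by gcongr
    _ = f t := by
      simp only [g, mul_assoc, ← exp_add, ← mul_add, sub_add_sub_cancel, sub_self, mul_zero,
        exp_zero, mul_one]

theorem integral_exp_mul_sub {a b c : ℝ} (hc : c ≠ 0) :
    ∫ t in a..b, exp (c * (t - a)) = (exp (c * (b - a)) - 1) / c := by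
  have hd : ∀ t ∈ uIcc a b,
      HasDerivAt (fun s ↦ exp (c * (s - a)) / c) (exp (c * (t - a))) t := by
    intro t _
    have := ((((hasDerivAt_id t).sub_const a).const_mul c).exp).div_const c
    exact this.congr_deriv (by field_simp; simp)
  rw [intervalIntegral.integral_eq_sub_of_hasDerivAt hd
    (Continuous.intervalIntegrable (by fun_prop) _ _), sub_self, mul_zero,
    exp_zero, sub_div]

theorem mul_integral_exp_le_integral_of_mul_le_deriv {f f' : ℝ → ℝ} {a b c : ℝ}
    (hab : a ≤ b) (hc : c ≠ 0) (hf : ∀ t ∈ Icc a b, HasDerivAt f (f' t) t)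
    (h : ∀ t ∈ Icc a b, c * f t ≤ f' t) :
    f a * ((exp (c * (b - a)) - 1) / c) ≤ ∫ t in a..b, f t := by
  have hcont : ContinuousOn f (uIcc a b) := by
    rw [uIcc_of_le hab]; exact fun t ht ↦ (hf t ht).continuousAt.continuousWithinAt
  rw [← integral_exp_mul_sub hc, ← intervalIntegral.integral_const_mul]
  exact intervalIntegral.integral_mono_on hab
    (Continuous.intervalIntegrable (by fun_prop) _ _) hcont.intervalIntegrable
    (mul_exp_le_of_mul_le_deriv hf h)

theorem mul_integral_exp_le_integral_of_deriv_le_neg_mul {f f' : ℝ → ℝ} {a b c : ℝ}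
    (hab : a ≤ b) (hc : c ≠ 0) (hf : ∀ t ∈ Icc a b, HasDerivAt f (f' t) t)
    (h : ∀ t ∈ Icc a b, f' t ≤ -c * f t) :
    f b * ((exp (c * (b - a)) - 1) / c) ≤ ∫ t in a..b, f t := by
  have hmem : ∀ s ∈ Icc (-b) (-a), -s ∈ Icc a b := fun s hs ↦
    ⟨le_neg_of_le_neg hs.2, neg_le.1 hs.1⟩
  have := mul_integral_exp_le_integral_of_mul_le_deriv (f := fun s ↦ f (-s))
    (f' := fun s ↦ -f' (-s)) (neg_le_neg hab) hc
    (fun s hs ↦ by simpa [Function.comp_def] using (hf _ (hmem s hs)).comp s (hasDerivAt_neg s))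
    (fun s hs ↦ by have := h _ (hmem s hs); linarith)
  rwa [intervalIntegral.integral_comp_neg, neg_neg, neg_neg, sub_neg_eq_add, neg_add_eq_sub] at this

theorem mul_sqrt_mul_le_sqrt_mul {x y A B K : ℝ} (hx : 0 ≤ x) (hy : 0 ≤ y) (hK : 0 ≤ K)
    (hxA : x * K ≤ A) (hyB : y * K ≤ B) : K * √(x * y) ≤ √(A * B) := by
  calc K * √(x * y) = √((x * K) * (y * K)) := by
        rw [show x * K * (y * K) = K ^ 2 * (x * y) by ring, sqrt_mul (sq_nonneg K), sqrt_sq hK]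
    _ ≤ √(A * B) :=
      sqrt_le_sqrt (mul_le_mul hxA hyB (by positivity) ((mul_nonneg hx hK).trans hxA))

theorem energy_transport_core_general (Φ Ψ Φ' Ψ' : ℝ → ℝ) (κ T : ℝ) (hκ : 0 < κ) (hT : 0 < T)
    (hΦpos : ∀ t ∈ Icc (0:ℝ) 1, 0 ≤ Φ t) (hΨpos : ∀ t ∈ Icc (0:ℝ) 1, 0 ≤ Ψ t)
    (hΦderiv : ∀ t ∈ Icc (0:ℝ) 1, HasDerivAt Φ (Φ' t) t)
    (hΨderiv : ∀ t ∈ Icc (0:ℝ) 1, HasDerivAt Ψ (Ψ' t) t)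
    (hΦ' : ∀ t ∈ Icc (0:ℝ) 1, Φ' t ≤ -(κ * T) * Φ t)
    (hΨ' : ∀ t ∈ Icc (0:ℝ) 1, Ψ' t ≥ κ * T * Ψ t) :
    (1 / 2) * Real.sqrt (Φ (1/2) * Ψ (1/2)) ≤
      κ / (exp (κ * T / 2) - 1) *
        Real.sqrt ((T / 2 * ∫ t in (1/2 : ℝ)..1, Ψ t) *
          (T / 2 * ∫ t in (0 : ℝ)..(1/2 : ℝ), Φ t)) := by
  have hc : κ * T ≠ 0 := (mul_pos hκ hT).ne'
  have hE : 0 < exp (κ * T / 2) - 1 := sub_pos.2 (one_lt_exp_iff.2 (by positivity))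
  set K := (exp (κ * T / 2) - 1) / (2 * κ)
  have hK : ∀ x, T / 2 * (x * ((exp (κ * T * (1 / 2)) - 1) / (κ * T))) = x * K := fun x ↦ by
    simp only [K]; field_simp
  have hleft : Icc (0:ℝ) (1/2) ⊆ Icc 0 1 := Icc_subset_Icc le_rfl (by norm_num)
  have hright : Icc (1/2:ℝ) 1 ⊆ Icc 0 1 := Icc_subset_Icc (by norm_num) le_rfl
  have hb := mul_le_mul_of_nonneg_left
    (mul_integral_exp_le_integral_of_deriv_le_neg_mul (by norm_num) hc
      (fun t ht ↦ hΦderiv t (hleft ht)) (fun t ht ↦ hΦ' t (hleft ht))) (half_pos hT).le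
  have ha := mul_le_mul_of_nonneg_left
    (mul_integral_exp_le_integral_of_mul_le_deriv (by norm_num) hc
      (fun t ht ↦ hΨderiv t (hright ht)) (fun t ht ↦ hΨ' t (hright ht))) (half_pos hT).le
  rw [sub_zero, hK] at hb
  rw [show (1:ℝ) - 1 / 2 = 1 / 2 by norm_num, hK] at ha
  calc (1 / 2) * √(Φ (1/2) * Ψ (1/2))
        = κ / (exp (κ * T / 2) - 1) * (K * √(Ψ (1/2) * Φ (1/2))) := by
        simp only [K]; rw [mul_comm (Ψ _)]; field_simp
    _ ≤ _ := by
      gcongr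
      exact mul_sqrt_mul_le_sqrt_mul (hΨpos _ (by norm_num)) (hΦpos _ (by norm_num))
        (by positivity) ha hb

/-- Quantitative core of the energy-transport inequality (Lemma 3.8): if `Φ, Ψ ≥ 0` are C¹
on `[0,1]` with `Φ' ≤ -κT·Φ` and `Ψ' ≥ κT·Ψ`, then with `a = (T/2)∫_{1/2}^1 Ψ` and
`b = (T/2)∫_0^{1/2} Φ`, one has `(1/2)√(Φ(1/2)Ψ(1/2)) ≤ (κ/(e^{κT/2}−1))·√(ab)`. -/
theorem energy_transport_core (Φ Ψ Φ' Ψ' : ℝ → ℝ) (κ T : ℝ) (hκ : 0 < κ) (hT : 0 < T)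
    (hΦpos : ∀ t ∈ Icc (0:ℝ) 1, 0 ≤ Φ t) (hΨpos : ∀ t ∈ Icc (0:ℝ) 1, 0 ≤ Ψ t)
    (hΦderiv : ∀ t ∈ Icc (0:ℝ) 1, HasDerivAt Φ (Φ' t) t)
    (hΨderiv : ∀ t ∈ Icc (0:ℝ) 1, HasDerivAt Ψ (Ψ' t) t)
    (hΦ'cont : ContinuousOn Φ' (Icc 0 1)) (hΨ'cont : ContinuousOn Ψ' (Icc 0 1))
    (hΦ' : ∀ t ∈ Icc (0:ℝ) 1, Φ' t ≤ -(κ * T) * Φ t)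
    (hΨ' : ∀ t ∈ Icc (0:ℝ) 1, Ψ' t ≥ κ * T * Ψ t) :
    (1 / 2) * Real.sqrt (Φ (1/2) * Ψ (1/2)) ≤
      κ / (exp (κ * T / 2) - 1) *
        Real.sqrt ((T / 2 * ∫ t in (1/2 : ℝ)..1, Ψ t) *
          (T / 2 * ∫ t in (0 : ℝ)..(1/2 : ℝ), Φ t)) :=
  energy_transport_core_general Φ Ψ Φ' Ψ' κ T hκ hT hΦpos hΨpos hΦderiv hΨderiv hΦ' hΨ'
end

section
/- Let (M, d) be a Polish space, m a probability measure, and for each n ∈ ℕ let R_n be a probability measure on M × M with positive density p_n with respect to m ⊗ m. Suppose that for every compact set K ⊆ M × M, inf_K (−log p_n) ≥ −c_n with c_n → 0 (so that lim inf_n ∫ φ dR_n ≥ ∫ φ d(m⊗m) for all nonnegative lower semicontinuous φ, i.e. R_n ⇀ m⊗m weakly). Then for any sequence π_n ⇀ π of couplings, lim inf_n H(π_n | R_n) ≥ H(π | m⊗m). -/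
/-!
The relative entropy has the Donsker–Varadhan representation
`H(P | Q) = sup_g (∫ g dP - log ∫ exp g dQ)` over bounded continuous `g`. For fixed `g` the
functional is continuous in `P` under weak convergence, so the supremum is lower semicontinuous.
Applied to singletons, the bound on compact sets gives `p_n ≤ exp c_n`, hence
`log ∫ exp g dR_n ≤ c_n + log ∫ exp g d(m ⊗ m)`, and the error `c_n` vanishes in the limit.

In the representation, `≥` is Gibbs' inequality against the tilted measure `Q.tilted g`. For `≤`
one tests with the log-density clamped to `[-n, n]` (or with a large multiple of the indicator of a
`Q`-null set charged by `P` when `P` is not `≪ Q`) and approximates the test function by bounded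
continuous ones in `L¹(P + Q)`.
-/

open MeasureTheory Filter
open scoped ENNReal Classical BoundedContinuousFunction

/-- Extended relative entropy `H(p|q) ∈ [0,∞]`. -/
noncomputable def relEntE {Ω : Type*} [MeasurableSpace Ω] (p q : Measure Ω) : ℝ≥0∞ :=
  if p ≪ q ∧ Integrable (fun x => Real.log (p.rnDeriv q x).toReal) p
  then ENNReal.ofReal (∫ x, Real.log (p.rnDeriv q x).toReal ∂p) else ⊤

open Real Topology

theorem abs_exp_sub_exp_le {a b k : ℝ} (ha : a ≤ k) (hb : b ≤ k) :
    |exp a - exp b| ≤ exp k * |a - b| := by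
  wlog hba : b ≤ a generalizing a b
  · rw [abs_sub_comm, abs_sub_comm a]
    exact this hb ha (le_of_not_ge hba)
  rw [abs_of_nonneg (sub_nonneg.2 (exp_le_exp.2 hba)), abs_of_nonneg (sub_nonneg.2 hba)]
  calc exp a - exp b = exp a * (1 - exp (b - a)) := by
        rw [mul_sub, mul_one, ← exp_add]
        ring_nf
    _ ≤ exp k * (a - b) :=
        mul_le_mul (exp_le_exp.2 ha) (by linarith [add_one_le_exp (b - a)])
          (sub_nonneg.2 (exp_le_one_iff.2 (by linarith))) (exp_pos k).le

theorem tendsto_min_natCast (t : ℝ) : Tendsto (fun n : ℕ => min t n) atTop (𝓝 t) :=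
  tendsto_atTop_of_eventually_const (i₀ := ⌈t⌉₊) fun _ hn =>
    min_eq_left ((Nat.le_ceil t).trans (Nat.cast_le.2 hn))

theorem min_eq_min_max_add_min {a c : ℝ} (hc : 0 ≤ c) :
    min a c = min (max a 0) c + min a 0 := by
  rcases le_total a 0 with ha | ha
  · simp [ha, hc, ha.trans hc]
  · simp [ha]

section Truncation

variable {Ω : Type*} [MeasurableSpace Ω] {μ : Measure Ω} {h : Ω → ℝ}

theorem tendsto_integral_min_natCast (hh : Integrable h μ) :
    Tendsto (fun n : ℕ => ∫ x, min (h x) n ∂μ) atTop (𝓝 (∫ x, h x ∂μ)) := by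
  refine integral_tendsto_of_tendsto_of_monotone (fun n => hh.mono
      (hh.aestronglyMeasurable.inf aestronglyMeasurable_const) (ae_of_all _ fun x => ?_)) hh
    (ae_of_all _ fun x _ _ hmn => min_le_min_left _ (Nat.cast_le.2 hmn))
    (ae_of_all _ fun x => tendsto_min_natCast (h x))
  rw [Real.norm_eq_abs, Real.norm_eq_abs, abs_le]
  exact ⟨le_min (neg_abs_le _) ((neg_nonpos.2 (abs_nonneg _)).trans n.cast_nonneg),
    (min_le_left _ _).trans (le_abs_self _)⟩

variable [IsFiniteMeasure μ]

theorem integrable_exp_of_le (hh : AEStronglyMeasurable h μ) {k : ℝ} (hk : ∀ x, h x ≤ k) :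
    Integrable (fun x => exp (h x)) μ :=
  .of_bound (continuous_exp.comp_aestronglyMeasurable hh) (exp k)
    (ae_of_all _ fun x => by rw [norm_of_nonneg (exp_pos _).le]; exact exp_le_exp.2 (hk x))

theorem integrable_min_max_zero (hm : AEStronglyMeasurable h μ) {c : ℝ} (hc : 0 ≤ c) :
    Integrable (fun x => min (max (h x) 0) c) μ :=
  .of_bound ((hm.sup aestronglyMeasurable_const).inf aestronglyMeasurable_const) c
    (ae_of_all _ fun x => by
      rw [Real.norm_of_nonneg (le_min (le_max_right _ _) hc)]
      exact min_le_right _ _)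

theorem integrable_min_of_integrable_min_zero (hm : AEStronglyMeasurable h μ)
    (hneg : Integrable (fun x => min (h x) 0) μ) {c : ℝ} (hc : 0 ≤ c) :
    Integrable (fun x => min (h x) c) μ :=
  ((integrable_min_max_zero hm hc).add hneg).congr
    (ae_of_all _ fun _ => (min_eq_min_max_add_min hc).symm)

theorem tendsto_integral_min_natCast_atTop (hm : AEStronglyMeasurable h μ)
    (hneg : Integrable (fun x => min (h x) 0) μ) (hh : ¬ Integrable h μ) :
    Tendsto (fun n : ℕ => ∫ x, min (h x) n ∂μ) atTop atTop := by
  have hm' : AEStronglyMeasurable (fun x => max (h x) 0) μ := hm.sup aestronglyMeasurable_const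
  have hpos : ∫⁻ x, ENNReal.ofReal (max (h x) 0) ∂μ = ⊤ := by
    by_contra hfin
    have := (lintegral_ofReal_ne_top_iff_integrable hm'
      (ae_of_all _ fun x => le_max_right _ _)).1 hfin
    exact hh ((this.add hneg).congr (ae_of_all _ fun x => by
      rw [Pi.add_apply, max_add_min, add_zero]))
  have hlim : Tendsto (fun n : ℕ => ∫ x, min (max (h x) 0) n ∂μ) atTop atTop := by
    rw [← ENNReal.tendsto_ofReal_nhds_top, ← hpos]
    simp_rw [ofReal_integral_eq_lintegral_ofReal (integrable_min_max_zero hm (Nat.cast_nonneg _))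
      (ae_of_all _ fun x => le_min (le_max_right _ _) (Nat.cast_nonneg _))]
    exact lintegral_tendsto_of_tendsto_of_monotone
      (fun n => (hm'.inf aestronglyMeasurable_const).aemeasurable.ennreal_ofReal)
      (ae_of_all _ fun x _ _ hmn =>
        ENNReal.ofReal_le_ofReal (min_le_min_left _ (Nat.cast_le.2 hmn)))
      (ae_of_all _ fun x => (ENNReal.continuous_ofReal.tendsto _).comp (tendsto_min_natCast _))
  have hsplit : ∀ n : ℕ,
      ∫ x, min (h x) n ∂μ = ∫ x, min (max (h x) 0) n ∂μ + ∫ x, min (h x) 0 ∂μ := fun n => by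
    rw [← integral_add (integrable_min_max_zero hm n.cast_nonneg) hneg]
    simp only [← min_eq_min_max_add_min n.cast_nonneg]
  simpa only [hsplit] using tendsto_atTop_add_const_right _ _ hlim

end Truncation

noncomputable def donskerVaradhan {Ω : Type*} [MeasurableSpace Ω] (P Q : Measure Ω)
    (f : Ω → ℝ) : ℝ :=
  ∫ x, f x ∂P - log (∫ x, exp (f x) ∂Q)

section DonskerVaradhan

variable {Ω : Type*} [MeasurableSpace Ω]

theorem relEntE_def (P Q : Measure Ω) :
    relEntE P Q = if P ≪ Q ∧ Integrable (llr P Q) P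
      then ENNReal.ofReal (∫ x, llr P Q x ∂P) else ⊤ :=
  rfl

theorem ofReal_donskerVaradhan_le_relEntE (P Q : Measure Ω) [IsProbabilityMeasure P]
    [SigmaFinite Q] [NeZero Q] {f : Ω → ℝ} (hfP : Integrable f P)
    (hfQ : Integrable (fun x => exp (f x)) Q) :
    ENNReal.ofReal (donskerVaradhan P Q f) ≤ relEntE P Q := by
  by_cases h : P ≪ Q ∧ Integrable (llr P Q) P
  · obtain ⟨hPQ, hllr⟩ := h
    have := isProbabilityMeasure_tilted hfQ
    have hgibbs := InformationTheory.integral_llr_add_sub_measure_univ_nonneg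
      (hPQ.trans (absolutelyContinuous_tilted hfQ))
      (integrable_llr_tilted_right hPQ hfP hllr hfQ)
    rw [integral_llr_tilted_right hPQ hfP hfQ hllr] at hgibbs
    simp only [probReal_univ] at hgibbs
    rw [relEntE_def, if_pos ⟨hPQ, hllr⟩, donskerVaradhan]
    exact ENNReal.ofReal_le_ofReal (by linarith)
  · rw [relEntE_def, if_neg h]
    exact le_top

theorem withDensity_ofReal_le_smul (Q : Measure Ω) {p : Ω → ℝ} {C : ℝ} (hp : ∀ x, p x ≤ C) :
    Q.withDensity (fun x => ENNReal.ofReal (p x)) ≤ ENNReal.ofReal C • Q :=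
  (withDensity_mono (ae_of_all _ fun x => ENNReal.ofReal_le_ofReal (hp x))).trans_eq
    (withDensity_const _)

theorem donskerVaradhan_sub_le_of_le_smul (P : Measure Ω) {Q ν : Measure Ω} [NeZero Q]
    [NeZero ν] {c : ℝ} (hνQ : ν ≤ ENNReal.ofReal (exp c) • Q) {f : Ω → ℝ}
    (hfQ : Integrable (fun x => exp (f x)) Q) :
    donskerVaradhan P Q f - c ≤ donskerVaradhan P ν f := by
  have hfcQ := hfQ.smul_measure (c := ENNReal.ofReal (exp c)) ENNReal.ofReal_ne_top
  have hν : ∫ x, exp (f x) ∂ν ≤ exp c * ∫ x, exp (f x) ∂Q := by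
    calc ∫ x, exp (f x) ∂ν ≤ ∫ x, exp (f x) ∂(ENNReal.ofReal (exp c) • Q) :=
          integral_mono_measure hνQ (ae_of_all _ fun x => (exp_pos _).le) hfcQ
      _ = exp c * ∫ x, exp (f x) ∂Q := by
          rw [integral_smul_measure, ENNReal.toReal_ofReal (exp_pos c).le, smul_eq_mul]
  have hlog : log (∫ x, exp (f x) ∂ν) ≤ c + log (∫ x, exp (f x) ∂Q) := by
    calc log (∫ x, exp (f x) ∂ν) ≤ log (exp c * ∫ x, exp (f x) ∂Q) :=
          log_le_log (integral_exp_pos (hfcQ.mono_measure hνQ)) hν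
      _ = c + log (∫ x, exp (f x) ∂Q) := by
          rw [log_mul (exp_pos c).ne' (integral_exp_pos hfQ).ne', log_exp]
  simp only [donskerVaradhan]
  linarith

theorem tendsto_donskerVaradhan (P Q : Measure Ω) [IsFiniteMeasure P] [IsFiniteMeasure Q]
    [NeZero Q] {f : Ω → ℝ} {g : ℕ → Ω → ℝ} (hf : Measurable f) (hg : ∀ n, Measurable (g n))
    {k : ℝ} (hfk : ∀ x, |f x| ≤ k) (hgk : ∀ n x, |g n x| ≤ k)
    (hfg : Tendsto (fun n => ∫⁻ x, ‖g n x - f x‖ₑ ∂(P + Q)) atTop (𝓝 0)) :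
    Tendsto (fun n => donskerVaradhan P Q (g n)) atTop (𝓝 (donskerVaradhan P Q f)) := by
  have hP : Tendsto (fun n => ∫⁻ x, ‖g n x - f x‖ₑ ∂P) atTop (𝓝 0) :=
    tendsto_of_tendsto_of_tendsto_of_le_of_le tendsto_const_nhds hfg (fun _ => zero_le)
      fun n => (lintegral_add_measure _ P Q).symm ▸ le_self_add
  have hQ : Tendsto (fun n => ∫⁻ x, ‖g n x - f x‖ₑ ∂Q) atTop (𝓝 0) :=
    tendsto_of_tendsto_of_tendsto_of_le_of_le tendsto_const_nhds hfg (fun _ => zero_le)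
      fun n => (lintegral_add_measure _ P Q).symm ▸ le_add_self
  have hexpQ : Tendsto (fun n => ∫⁻ x, ‖exp (g n x) - exp (f x)‖ₑ ∂Q) atTop (𝓝 0) := by
    have := ENNReal.Tendsto.const_mul (a := ENNReal.ofReal (exp k)) hQ
      (Or.inr ENNReal.ofReal_ne_top)
    rw [mul_zero] at this
    refine tendsto_of_tendsto_of_tendsto_of_le_of_le tendsto_const_nhds this (fun _ => zero_le)
      fun n => ?_
    rw [← lintegral_const_mul' _ _ ENNReal.ofReal_ne_top]
    refine lintegral_mono fun x => ?_
    simp only [Real.enorm_eq_ofReal_abs]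
    rw [← ENNReal.ofReal_mul (exp_pos k).le]
    exact ENNReal.ofReal_le_ofReal
      (abs_exp_sub_exp_le (le_of_abs_le (hgk n x)) (le_of_abs_le (hfk x)))
  have hexp_int : ∀ u : Ω → ℝ, Measurable u → (∀ x, |u x| ≤ k) →
      Integrable (fun x => exp (u x)) Q := fun u hu huk =>
    integrable_exp_of_le hu.aestronglyMeasurable fun x => le_of_abs_le (huk x)
  refine (tendsto_integral_of_L1 f hf.aestronglyMeasurable (Eventually.of_forall fun n =>
      .of_bound (hg n).aestronglyMeasurable k (ae_of_all _ (hgk n))) hP).sub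
    ((continuousAt_log (integral_exp_pos (hexp_int f hf hfk)).ne').tendsto.comp ?_)
  exact tendsto_integral_of_L1 _ (hexp_int f hf hfk).aestronglyMeasurable
    (Eventually.of_forall fun n => hexp_int _ (hg n) (hgk n)) hexpQ

end DonskerVaradhan

section LogLikelihoodRatio

variable {Ω : Type*} [MeasurableSpace Ω] (P Q : Measure Ω)

theorem integrable_min_llr_zero [IsFiniteMeasure P] [IsFiniteMeasure Q] (hPQ : P ≪ Q) :
    Integrable (fun x => min (llr P Q x) 0) P := by
  have hmeas := (Measure.measurable_rnDeriv P Q).inv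
  have hinv : Integrable (fun x => ((P.rnDeriv Q x)⁻¹).toReal) P := by
    refine integrable_toReal_of_lintegral_ne_top hmeas.aemeasurable ?_
    rw [← lintegral_rnDeriv_mul hPQ (f := fun x => (P.rnDeriv Q x)⁻¹) hmeas.aemeasurable]
    refine ne_top_of_le_ne_top (measure_ne_top Q Set.univ) ?_
    exact (lintegral_mono fun x => ENNReal.mul_inv_le_one _).trans_eq lintegral_one
  refine hinv.mono ((measurable_llr P Q).min measurable_const).aestronglyMeasurable ?_
  filter_upwards [Measure.rnDeriv_pos hPQ, hPQ.ae_le (Measure.rnDeriv_lt_top P Q)]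
    with x h0 htop
  have hr : 0 < (P.rnDeriv Q x).toReal := ENNReal.toReal_pos h0.ne' htop.ne
  rw [Real.norm_eq_abs, Real.norm_eq_abs, abs_of_nonpos (min_le_right _ _), llr,
    ENNReal.toReal_inv, abs_of_pos (inv_pos.2 hr), neg_le]
  exact le_min (by linarith [log_inv (P.rnDeriv Q x).toReal, log_le_self (inv_nonneg.2 hr.le)])
    (neg_nonpos.2 (inv_nonneg.2 hr.le))

/-- `llr P Q` clamped to `[-k, k]`; the clamp is applied to the density, so the value is `-k`
(rather than `log 0 = 0`) where the density vanishes. -/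
noncomputable def truncLlr (k : ℝ) (x : Ω) : ℝ :=
  log (max (exp (-k)) (min (exp k) (P.rnDeriv Q x).toReal))

theorem measurable_truncLlr (k : ℝ) : Measurable (truncLlr P Q k) :=
  (measurable_const.max (measurable_const.min
    (Measure.measurable_rnDeriv P Q).ennreal_toReal)).log

theorem abs_truncLlr_le {k : ℝ} (hk : 0 ≤ k) (x : Ω) : |truncLlr P Q k x| ≤ k := by
  have hpos : 0 < max (exp (-k)) (min (exp k) (P.rnDeriv Q x).toReal) :=
    lt_max_of_lt_left (exp_pos _)
  rw [truncLlr, abs_le, le_log_iff_exp_le hpos, log_le_iff_le_exp hpos]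
  exact ⟨le_max_left _ _, max_le (exp_le_exp.2 (by linarith)) (min_le_left _ _)⟩

theorem exp_truncLlr_le (k : ℝ) (x : Ω) :
    exp (truncLlr P Q k x) ≤ (P.rnDeriv Q x).toReal + exp (-k) := by
  rw [truncLlr, exp_log (lt_max_of_lt_left (exp_pos _))]
  exact max_le (le_add_of_nonneg_left ENNReal.toReal_nonneg)
    ((min_le_right _ _).trans (le_add_of_nonneg_right (exp_pos _).le))

theorem min_llr_le_truncLlr [SigmaFinite P] [SigmaFinite Q] (hPQ : P ≪ Q) (k : ℝ) :
    ∀ᵐ x ∂P, min (llr P Q x) k ≤ truncLlr P Q k x := by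
  filter_upwards [Measure.rnDeriv_pos hPQ, hPQ.ae_le (Measure.rnDeriv_lt_top P Q)]
    with x h0 htop
  have hr : 0 < (P.rnDeriv Q x).toReal := ENNReal.toReal_pos h0.ne' htop.ne
  calc min (llr P Q x) k ≤ log (min (exp k) (P.rnDeriv Q x).toReal) := by
        rw [le_log_iff_exp_le (lt_min (exp_pos k) hr), exp_monotone.map_min, llr, exp_log hr,
          min_comm]
    _ ≤ truncLlr P Q k x := log_le_log (lt_min (exp_pos k) hr) (le_max_right _ _)

variable [IsProbabilityMeasure P] [IsProbabilityMeasure Q]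

theorem integral_min_llr_sub_le_donskerVaradhan (hPQ : P ≪ Q) {k : ℝ} (hk : 0 ≤ k) :
    ∫ x, min (llr P Q x) k ∂P - exp (-k) ≤ donskerVaradhan P Q (truncLlr P Q k) := by
  have hbdd : ∀ x, truncLlr P Q k x ≤ k := fun x => le_of_abs_le (abs_truncLlr_le P Q hk x)
  have hexp_int :=
    integrable_exp_of_le (μ := Q) (measurable_truncLlr P Q k).aestronglyMeasurable hbdd
  have hP : ∫ x, min (llr P Q x) k ∂P ≤ ∫ x, truncLlr P Q k x ∂P :=
    integral_mono_ae
      (integrable_min_of_integrable_min_zero (measurable_llr P Q).aestronglyMeasurable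
        (integrable_min_llr_zero P Q hPQ) hk)
      (.of_bound (measurable_truncLlr P Q k).aestronglyMeasurable k
        (ae_of_all _ (abs_truncLlr_le P Q hk)))
      (min_llr_le_truncLlr P Q hPQ k)
  have hQ : ∫ x, exp (truncLlr P Q k x) ∂Q ≤ 1 + exp (-k) := by
    calc ∫ x, exp (truncLlr P Q k x) ∂Q ≤ ∫ x, ((P.rnDeriv Q x).toReal + exp (-k)) ∂Q :=
          integral_mono hexp_int (Measure.integrable_toReal_rnDeriv.add (integrable_const _))
            (exp_truncLlr_le P Q k)
      _ = 1 + exp (-k) := by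
          rw [integral_add Measure.integrable_toReal_rnDeriv (integrable_const _),
            Measure.integral_toReal_rnDeriv hPQ]
          simp
  have hlog : log (∫ x, exp (truncLlr P Q k x) ∂Q) ≤ exp (-k) :=
    calc log (∫ x, exp (truncLlr P Q k x) ∂Q) ≤ log (1 + exp (-k)) :=
          log_le_log (integral_exp_pos hexp_int) hQ
      _ ≤ exp (-k) := by linarith [log_le_sub_one_of_pos (by positivity : 0 < 1 + exp (-k))]
  rw [donskerVaradhan]
  linarith

theorem exists_lt_donskerVaradhan_truncLlr (hPQ : P ≪ Q) {L : ℝ}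
    (hL : ENNReal.ofReal L < relEntE P Q) :
    ∃ n : ℕ, L < donskerVaradhan P Q (truncLlr P Q n) := by
  suffices ∀ᶠ n : ℕ in atTop, L < ∫ x, min (llr P Q x) n ∂P - exp (-n) from
    let ⟨n, hn⟩ := this.exists
    ⟨n, hn.trans_le (integral_min_llr_sub_le_donskerVaradhan P Q hPQ n.cast_nonneg)⟩
  by_cases hint : Integrable (llr P Q) P
  · rw [relEntE_def, if_pos ⟨hPQ, hint⟩, ENNReal.ofReal_lt_ofReal_iff'] at hL
    have hexp : Tendsto (fun n : ℕ => exp (-(n : ℝ))) atTop (𝓝 0) :=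
      tendsto_exp_atBot.comp (tendsto_neg_atTop_atBot.comp tendsto_natCast_atTop_atTop)
    have := (tendsto_integral_min_natCast hint).sub hexp
    rw [sub_zero] at this
    exact this.eventually (lt_mem_nhds hL.1)
  · filter_upwards [(tendsto_integral_min_natCast_atTop (measurable_llr P Q).aestronglyMeasurable
      (integrable_min_llr_zero P Q hPQ) hint).eventually_gt_atTop (L + 1)] with n hn
    linarith [exp_le_one_iff.2 (neg_nonpos.2 (Nat.cast_nonneg (α := ℝ) n))]

theorem exists_lt_donskerVaradhan_indicator (hPQ : ¬ P ≪ Q) (L : ℝ) :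
    ∃ (s : Set Ω) (t : ℝ), MeasurableSet s ∧
      L < donskerVaradhan P Q (s.indicator fun _ => t) := by
  obtain ⟨s, hs, hQs, hPs⟩ : ∃ s, MeasurableSet s ∧ Q s = 0 ∧ P s ≠ 0 := by
    by_contra! H
    exact hPQ (Measure.AbsolutelyContinuous.mk H)
  have ha : 0 < P.real s := ENNReal.toReal_pos hPs (measure_ne_top P s)
  set t := L / P.real s + 1
  have hQ : ∫ x, exp (s.indicator (fun _ => t) x) ∂Q = 1 := by
    rw [integral_congr_ae (g := fun _ => (1 : ℝ)) ?_]
    · simp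
    filter_upwards [measure_eq_zero_iff_ae_notMem.1 hQs] with x hx
    simp [hx]
  refine ⟨s, t, hs, ?_⟩
  rw [donskerVaradhan, integral_indicator_const _ hs, hQ, log_one, sub_zero, smul_eq_mul,
    mul_add, mul_div_cancel₀ _ ha.ne', mul_one]
  linarith

theorem exists_bounded_lt_donskerVaradhan {L : ℝ} (hL : ENNReal.ofReal L < relEntE P Q) :
    ∃ f : Ω → ℝ, Measurable f ∧ (∃ k, ∀ x, |f x| ≤ k) ∧ L < donskerVaradhan P Q f := by
  by_cases hPQ : P ≪ Q
  · obtain ⟨n, hn⟩ := exists_lt_donskerVaradhan_truncLlr P Q hPQ hL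
    exact ⟨_, measurable_truncLlr P Q n, ⟨n, abs_truncLlr_le P Q n.cast_nonneg⟩, hn⟩
  · obtain ⟨s, t, hs, hst⟩ := exists_lt_donskerVaradhan_indicator P Q hPQ L
    exact ⟨_, measurable_const.indicator hs,
      ⟨|t|, fun x => norm_indicator_le_norm_self (fun _ => t) x⟩, hst⟩

end LogLikelihoodRatio

section Approximation

variable {Ω : Type*} [MeasurableSpace Ω] [PseudoMetricSpace Ω] [BorelSpace Ω]

theorem exists_seq_bcf_abs_le_tendsto_lintegral (μ : Measure Ω) [IsFiniteMeasure μ]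
    {f : Ω → ℝ} (hf : Measurable f) {k : ℝ} (hfk : ∀ x, |f x| ≤ k) :
    ∃ g : ℕ → Ω →ᵇ ℝ, (∀ n x, |g n x| ≤ k) ∧
      Tendsto (fun n => ∫⁻ x, ‖g n x - f x‖ₑ ∂μ) atTop (𝓝 0) := by
  have hfi : Integrable f μ := .of_bound hf.aestronglyMeasurable k (ae_of_all _ hfk)
  choose h hh using fun n : ℕ => hfi.exists_boundedContinuous_lintegral_sub_le
    (ENNReal.inv_ne_zero.2 (ENNReal.natCast_ne_top n))
  set clamp : ℝ → ℝ := fun t => max (-k) (min k t)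
  have hclamp : LipschitzWith 1 clamp := (LipschitzWith.id.const_min k).const_max (-k)
  have hclamp_f : ∀ x, clamp (f x) = f x := fun x => by
    obtain ⟨h1, h2⟩ := abs_le.1 (hfk x)
    simp only [clamp, min_eq_right h2, max_eq_right h1]
  refine ⟨fun n => (h n).comp clamp hclamp, fun n x => ?_, ?_⟩
  · have hk : -k ≤ k := by linarith [abs_nonneg (f x), hfk x]
    simp only [BoundedContinuousFunction.comp_apply, clamp, abs_le]
    exact ⟨le_max_left _ _, max_le hk (min_le_left _ _)⟩
  refine tendsto_of_tendsto_of_tendsto_of_le_of_le tendsto_const_nhds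
    ENNReal.tendsto_inv_nat_nhds_zero (fun _ => zero_le)
    fun n => (lintegral_mono fun x => ?_).trans (hh n).1
  calc ‖clamp (h n x) - f x‖ₑ = edist (clamp (h n x)) (clamp (f x)) := by
        rw [hclamp_f, edist_eq_enorm_sub]
    _ ≤ edist (h n x) (f x) := by simpa using hclamp.edist_le_mul (h n x) (f x)
    _ = ‖f x - h n x‖ₑ := by rw [edist_comm, edist_eq_enorm_sub]

theorem exists_bcf_lt_donskerVaradhan (P Q : Measure Ω) [IsFiniteMeasure P] [IsFiniteMeasure Q]
    [NeZero Q] {f : Ω → ℝ} (hf : Measurable f) {k : ℝ} (hfk : ∀ x, |f x| ≤ k) {L : ℝ}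
    (hL : L < donskerVaradhan P Q f) :
    ∃ g : Ω →ᵇ ℝ, L < donskerVaradhan P Q g := by
  obtain ⟨g, hgk, hfg⟩ := exists_seq_bcf_abs_le_tendsto_lintegral (P + Q) hf hfk
  have hlim := tendsto_donskerVaradhan P Q hf (fun n => (g n).continuous.measurable) hfk hgk hfg
  obtain ⟨n, hn⟩ := (hlim.eventually (lt_mem_nhds hL)).exists
  exact ⟨g n, hn⟩

theorem relEntE_le_iSup_donskerVaradhan (P Q : Measure Ω) [IsProbabilityMeasure P]
    [IsProbabilityMeasure Q] :
    relEntE P Q ≤ ⨆ g : Ω →ᵇ ℝ, ENNReal.ofReal (donskerVaradhan P Q g) := by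
  refine le_of_forall_lt fun c hc => ?_
  obtain ⟨f, hf, ⟨k, hfk⟩, hLf⟩ := exists_bounded_lt_donskerVaradhan P Q (L := c.toReal)
    (by rwa [ENNReal.ofReal_toReal hc.ne_top])
  obtain ⟨g, hg⟩ := exists_bcf_lt_donskerVaradhan P Q hf hfk hLf
  calc c = ENNReal.ofReal c.toReal := (ENNReal.ofReal_toReal hc.ne_top).symm
    _ < ENNReal.ofReal (donskerVaradhan P Q g) :=
        (ENNReal.ofReal_lt_ofReal_iff_of_nonneg ENNReal.toReal_nonneg).2 hg
    _ ≤ ⨆ g : Ω →ᵇ ℝ, ENNReal.ofReal (donskerVaradhan P Q g) :=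
        le_iSup (fun g : Ω →ᵇ ℝ => ENNReal.ofReal (donskerVaradhan P Q g)) g

end Approximation

theorem gamma_liminf_relEnt_general {M : Type*} [MetricSpace M] [PolishSpace M]
    [MeasurableSpace M] [BorelSpace M]
    (m : Measure M) [IsProbabilityMeasure m]
    (p : ℕ → M × M → ℝ)
    (R : ℕ → Measure (M × M))
    (hR : ∀ n, R n = (m.prod m).withDensity fun z => ENNReal.ofReal (p n z))
    (hRprob : ∀ n, IsProbabilityMeasure (R n))
    (c : ℕ → ℝ) (hc : Tendsto c atTop (nhds 0))
    (hlb : ∀ K : Set (M × M), IsCompact K → ∀ n, ∀ z ∈ K, -(c n) ≤ -Real.log (p n z))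
    (πseq : ℕ → Measure (M × M)) (πlim : Measure (M × M))
    (hπprob : ∀ n, IsProbabilityMeasure (πseq n)) (hπlim : IsProbabilityMeasure πlim)
    (hweak : ∀ f : BoundedContinuousFunction (M × M) ℝ,
      Tendsto (fun n => ∫ z, f z ∂(πseq n)) atTop (nhds (∫ z, f z ∂πlim))) :
    relEntE πlim (m.prod m) ≤ atTop.liminf fun n => relEntE (πseq n) (R n) := by
  have hRle : ∀ n, R n ≤ ENNReal.ofReal (exp (c n)) • m.prod m := fun n =>
    (hR n).trans_le (withDensity_ofReal_le_smul _ fun z => (le_exp_log (p n z)).trans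
      (exp_le_exp.2 (by linarith [hlb {z} isCompact_singleton n z rfl])))
  refine (relEntE_le_iSup_donskerVaradhan πlim _).trans (iSup_le fun g => ?_)
  have hexp : ∀ (μ : Measure (M × M)) [IsFiniteMeasure μ], Integrable (fun z => exp (g z)) μ :=
    fun μ _ => integrable_exp_of_le g.continuous.aestronglyMeasurable fun z =>
      (le_norm_self _).trans (g.norm_coe_le_norm z)
  have hlim : Tendsto (fun n => donskerVaradhan (πseq n) (m.prod m) g - c n) atTop
      (𝓝 (donskerVaradhan πlim (m.prod m) g)) := by
    simpa [donskerVaradhan] using ((hweak g).sub_const _).sub hc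
  refine ((ENNReal.continuous_ofReal.tendsto _).comp hlim).liminf_eq.symm.le.trans
    (liminf_le_liminf (Eventually.of_forall fun n => ?_))
  have := hπprob n
  have := hRprob n
  exact (ENNReal.ofReal_le_ofReal (donskerVaradhan_sub_le_of_le_smul _ (hRle n) (hexp _))).trans
    (ofReal_donskerVaradhan_le_relEntE _ _ (g.integrable _) (hexp _))

/-- Γ-liminf part of Lemma 3.1: if `R n = p_n·(m⊗m)` with `−log p_n ≥ −c_n` on every
compact set and `c_n → 0` (so `R n ⇀ m ⊗ m`), then for any weakly convergent sequence of
couplings `π_n ⇀ π` one has `liminf_n H(π_n | R_n) ≥ H(π | m⊗m)`. -/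
theorem gamma_liminf_relEnt {M : Type*} [MetricSpace M] [PolishSpace M]
    [MeasurableSpace M] [BorelSpace M]
    (m : Measure M) [IsProbabilityMeasure m]
    (p : ℕ → M × M → ℝ) (hpmeas : ∀ n, Measurable (p n)) (hppos : ∀ n z, 0 < p n z)
    (R : ℕ → Measure (M × M))
    (hR : ∀ n, R n = (m.prod m).withDensity fun z => ENNReal.ofReal (p n z))
    (hRprob : ∀ n, IsProbabilityMeasure (R n))
    (c : ℕ → ℝ) (hc : Tendsto c atTop (nhds 0))
    (hlb : ∀ K : Set (M × M), IsCompact K → ∀ n, ∀ z ∈ K, -(c n) ≤ -Real.log (p n z))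
    (πseq : ℕ → Measure (M × M)) (πlim : Measure (M × M))
    (hπprob : ∀ n, IsProbabilityMeasure (πseq n)) (hπlim : IsProbabilityMeasure πlim)
    (μ ν : Measure M)
    (hcoupl : ∀ n, (πseq n).fst = μ ∧ (πseq n).snd = ν)
    (hcoupl' : πlim.fst = μ ∧ πlim.snd = ν)
    (hweak : ∀ f : BoundedContinuousFunction (M × M) ℝ,
      Tendsto (fun n => ∫ z, f z ∂(πseq n)) atTop (nhds (∫ z, f z ∂πlim))) :
    relEntE πlim (m.prod m) ≤ atTop.liminf fun n => relEntE (πseq n) (R n) :=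
  gamma_liminf_relEnt_general m p R hR hRprob c hc hlb πseq πlim hπprob hπlim hweak
end

section
/- Let κ, T > 0 and let p_T(x,y) = (1 − e^{−κT})^{−1/2}·exp(−κ(x² − 2e^{κT/2}xy + y²)/(2(e^{κT} − 1))) be the Ornstein–Uhlenbeck transition kernel with respect to the Gaussian measure m(dy) = √(κ/(2π))e^{−κy²/2}dy. Then for φ(x) = αx, the function Q₁^T φ(x) := −T·log ∫ exp(−αy/T)·p_T(x,y) dm(y) satisfies Q₁^T φ(x) = αx·e^{−κT/2} − α²(1 − e^{−κT})/(2κT). -/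
open Real MeasureTheory

/-- Explicit computation of the Hopf–Lax-type transform `Q₁^T` on linear functions for the
stationary Ornstein–Uhlenbeck semigroup (key step of Theorem A.1):
`Q₁^T(αx) = αx·e^{−κT/2} − α²(1 − e^{−κT})/(2κT)`. -/
theorem ou_QLax_linear (κ T : ℝ) (hκ : 0 < κ) (hT : 0 < T)
    (m : Measure ℝ)
    (hm : m = (volume : Measure ℝ).withDensity
      fun y => ENNReal.ofReal (Real.sqrt (κ / (2 * π)) * exp (-(κ * y ^ 2) / 2)))
    (pT : ℝ → ℝ → ℝ)
    (hpT : ∀ x y, pT x y = (Real.sqrt (1 - exp (-(κ * T))))⁻¹ *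
      exp (-(κ * (x ^ 2 - 2 * exp (κ * T / 2) * x * y + y ^ 2)) /
        (2 * (exp (κ * T) - 1))))
    (α : ℝ) :
    ∀ x : ℝ, -T * Real.log (∫ y, exp (-(α * y) / T) * pT x y ∂m) =
      α * x * exp (-(κ * T) / 2) - α ^ 2 * (1 - exp (-(κ * T))) / (2 * κ * T) := by
  intro x
  have hπ : (0:ℝ) < π := Real.pi_pos
  set v : ℝ := exp (κ * T / 2) with hv
  have hv1 : 1 < v := by
    rw [hv, show (1:ℝ) = exp 0 from (Real.exp_zero).symm]
    exact Real.exp_lt_exp.mpr (by positivity)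
  have hv0 : 0 < v := lt_trans one_pos hv1
  have hv2 : 0 < v ^ 2 - 1 := by nlinarith
  have hvsq : exp (κ * T) = v ^ 2 := by
    rw [hv, sq, ← Real.exp_add]; congr 1; ring
  have hvneg : exp (-(κ * T)) = (v ^ 2)⁻¹ := by rw [Real.exp_neg, hvsq]
  have hvhalf : exp (-(κ * T) / 2) = v⁻¹ := by
    rw [show -(κ * T) / 2 = -(κ * T / 2) by ring, Real.exp_neg, hv]
  set b : ℝ := κ * v ^ 2 / (2 * (v ^ 2 - 1)) with hbdef
  have hb : 0 < b := by positivity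
  set c : ℝ := (κ * v * x / (v ^ 2 - 1) - α / T) / (2 * b) with hcdef
  set E : ℝ := α ^ 2 * (1 - (v ^ 2)⁻¹) / (2 * κ * T ^ 2) - α * x / (v * T) with hEdef
  have hA : Real.sqrt (κ / (2 * π)) * (Real.sqrt (1 - exp (-(κ * T))))⁻¹
      = Real.sqrt (b / π) := by
    rw [hvneg, ← Real.sqrt_inv, ← Real.sqrt_mul (by positivity)]
    congr 1
    rw [hbdef]
    have h1 : 1 - (v ^ 2)⁻¹ = (v ^ 2 - 1) / v ^ 2 := by field_simp
    rw [h1]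
    field_simp
  have hpoint : ∀ y : ℝ,
      Real.sqrt (κ / (2 * π)) * exp (-(κ * y ^ 2) / 2) *
        (exp (-(α * y) / T) * pT x y)
      = Real.sqrt (b / π) * exp E * exp (-b * (y - c) ^ 2) := by
    intro y
    rw [hpT, hvsq, hvneg]
    have hexp : -(κ * y ^ 2) / 2 + (-(α * y) / T +
        -(κ * (x ^ 2 - 2 * v * x * y + y ^ 2)) / (2 * (v ^ 2 - 1)))
        = E + -b * (y - c) ^ 2 := by
      rw [hEdef, hcdef, hbdef]
      field_simp
      ring
    calc Real.sqrt (κ / (2 * π)) * exp (-(κ * y ^ 2) / 2) *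
        (exp (-(α * y) / T) * ((Real.sqrt (1 - (v ^ 2)⁻¹))⁻¹ *
          exp (-(κ * (x ^ 2 - 2 * v * x * y + y ^ 2)) / (2 * (v ^ 2 - 1)))))
        = (Real.sqrt (κ / (2 * π)) * (Real.sqrt (1 - (v ^ 2)⁻¹))⁻¹) *
            exp (-(κ * y ^ 2) / 2 + (-(α * y) / T +
              -(κ * (x ^ 2 - 2 * v * x * y + y ^ 2)) / (2 * (v ^ 2 - 1)))) := by
          rw [Real.exp_add, Real.exp_add]; ring
      _ = Real.sqrt (b / π) * exp (E + -b * (y - c) ^ 2) := by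
          rw [hexp, ← hvneg, hA]
      _ = Real.sqrt (b / π) * exp E * exp (-b * (y - c) ^ 2) := by
          rw [Real.exp_add]; ring
  have key : (∫ y, exp (-(α * y) / T) * pT x y ∂m) = exp E := by
    rw [hm]
    have hmeas : Measurable fun y : ℝ =>
        Real.toNNReal (Real.sqrt (κ / (2 * π)) * exp (-(κ * y ^ 2) / 2)) := by
      fun_prop
    rw [show ((volume : Measure ℝ).withDensity
        fun y => ENNReal.ofReal (Real.sqrt (κ / (2 * π)) * exp (-(κ * y ^ 2) / 2)))
        = (volume : Measure ℝ).withDensity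
        (fun y => ((Real.toNNReal (Real.sqrt (κ / (2 * π)) * exp (-(κ * y ^ 2) / 2)))
          : ENNReal)) from rfl,
      integral_withDensity_eq_integral_smul hmeas]
    have : ∀ y : ℝ, (Real.toNNReal (Real.sqrt (κ / (2 * π)) * exp (-(κ * y ^ 2) / 2)))
        • (exp (-(α * y) / T) * pT x y)
        = Real.sqrt (b / π) * exp E * exp (-b * (y - c) ^ 2) := by
      intro y
      rw [NNReal.smul_def, Real.coe_toNNReal _ (by positivity)]
      exact hpoint y
    simp only [this]
    rw [MeasureTheory.integral_const_mul]
    have hshift : (∫ y : ℝ, exp (-b * (y - c) ^ 2)) = ∫ y : ℝ, exp (-b * y ^ 2) :=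
      integral_sub_right_eq_self (fun y => exp (-b * y ^ 2)) c
    rw [hshift, integral_gaussian]
    rw [mul_assoc, mul_comm (exp E), ← mul_assoc, ← Real.sqrt_mul (by positivity)]
    have : b / π * (π / b) = 1 := by field_simp
    rw [this, Real.sqrt_one, one_mul]
  rw [key, Real.log_exp, hEdef, hvneg, hvhalf]
  field_simp
  ring
end
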